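/- Let p be a prime, α ∈ ℂ_p with |α|_p = 1, F ∈ ℂ_p[X]∖{0} with F(α) = 0, and ζ ∈ ℂ_p a root of unity of order p^k·m with p ∤ m. Let M be a nonempty subset of Gal(ℚ(ζ)/ℚ) with F(σ(ζ)) ≠ 0 for all σ ∈ M. Then 0 ≥ Σ_{σ∈M} log|σ(ζ) - α|_p ≥ -(c(F) + k·log p), where c(F) = -log(inf(F)/|F|_p) and inf(F) = inf{|F(ξ)|_p : ξ a root of unity with F(ξ) ≠ 0}. -/

import Mathlib

/-- The `p`-adic Gauss norm of a polynomial: the maximum of the norms of its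
coefficients. -/
noncomputable def gaussNorm {K : Type*} [NontriviallyNormedField K] (F : Polynomial K) : ℝ :=
  ((F.support.sup fun i => ‖F.coeff i‖₊ : NNReal) : ℝ)

/-- `inf(F)`: the infimum of `|F(ξ)|_p` over roots of unity `ξ` with `F(ξ) ≠ 0`. -/
noncomputable def infF {K : Type*} [NontriviallyNormedField K] (F : Polynomial K) : ℝ :=
  sInf {r : ℝ | ∃ ξ : K, IsOfFinOrder ξ ∧ F.eval ξ ≠ 0 ∧ r = ‖F.eval ξ‖}

/-- `c(F) = -log(inf(F)/|F|_p)`. -/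
noncomputable def cF {K : Type*} [NontriviallyNormedField K] (F : Polynomial K) : ℝ :=
  -Real.log (infF F / gaussNorm F)

/-!
Choose `σ₀ ∈ M` such that `β = σ₀(ζ)` is closest to `α`. Since `F(α) = 0` and both points lie in
the unit ball, `|F(β)| ≤ |β - α|·|F|`, so the factor at `σ₀` is at least `inf(F)/|F|`. For every
other `σ`, the ultrametric inequality gives `|σ(ζ) - α| ≥ |σ(ζ) - β|`, and the product of
`|ξ - β|` over all `N`-th roots of unity `ξ ≠ β` is `|N β^(N-1)| = |N| = p^(-k)` (the derivative
of `X^N - 1` at `β`); the factors missing from `M` are at most `1`.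

`inf(F) > 0` (Tate–Voloch): over an algebraically closed field `|F(ξ)|` is `|lc F|` times the
product of the distances from `ξ` to the roots of `F`, and roots of unity cannot accumulate at
any point because distinct ones are at distance `≥ 1/2`: for `η ≠ 1` of order `n`,
`1/n ≤ |n| = ∏_{t=1}^{n-1} |1 - η^t| ≤ |1 - η|^(n-1)` and `n ≤ 2^(n-1)`.
-/

open IsUltrametricDist
open scoped Polynomial

lemma exists_pos_forall_le_dist_of_pairwise {X : Type*} [MetricSpace X] {S : Set X} {δ : ℝ}
    (hδ : 0 < δ) (hS : S.Pairwise fun x y => δ ≤ dist x y) (r : X) :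
    ∃ b > 0, ∀ x ∈ S, x ≠ r → b ≤ dist x r := by
  by_cases hclose : ∃ x₀ ∈ S, x₀ ≠ r ∧ dist x₀ r < δ / 2
  · obtain ⟨x₀, hx₀, hx₀r, hlt⟩ := hclose
    refine ⟨dist x₀ r, dist_pos.mpr hx₀r, fun x hx _ => ?_⟩
    rcases eq_or_ne x x₀ with rfl | hne
    · exact le_rfl
    · linarith [hS hx hx₀ hne, dist_triangle x r x₀, dist_comm x₀ r]
  · push Not at hclose
    exact ⟨δ / 2, half_pos hδ, hclose⟩

section RootsOfUnity

open Polynomial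

lemma isOfFinOrder_of_mem_nthRootsFinset {R : Type*} [CommRing R] [IsDomain R] {n : ℕ} {x : R}
    (hx : x ∈ nthRootsFinset n (1 : R)) : IsOfFinOrder x := by
  have hn : 0 < n := Nat.pos_of_ne_zero fun h => by simp [h] at hx
  exact isOfFinOrder_iff_pow_eq_one.mpr ⟨n, hn, (mem_nthRootsFinset hn 1).mp hx⟩

lemma prod_sub_nthRootsFinset_erase {R : Type*} [CommRing R] [IsDomain R] [DecidableEq R]
    {n : ℕ} {ζ : R} (hζ : IsPrimitiveRoot ζ n) {β : R} (hβ : β ∈ nthRootsFinset n (1 : R)) :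
    ∏ x ∈ (nthRootsFinset n (1 : R)).erase β, (β - x) = n * β ^ (n - 1) := by
  have hn : 0 < n := Nat.pos_of_ne_zero fun h => by simp [h] at hβ
  have h := congrArg (fun P => eval β (derivative P)) (X_pow_sub_one_eq_prod hn hζ)
  simp only [Finset.prod_eq_multiset_prod] at h
  rw [eval_multiset_prod_X_sub_C_derivative hβ] at h
  simpa [Finset.prod_eq_multiset_prod, Finset.erase_val, derivative_X_pow] using h.symm

lemma prod_norm_sub_nthRootsFinset_erase {K : Type*} [NormedField K] [DecidableEq K] {n : ℕ}
    {ζ : K} (hζ : IsPrimitiveRoot ζ n) {β : K} (hβ : β ∈ nthRootsFinset n (1 : K)) :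
    ∏ x ∈ (nthRootsFinset n (1 : K)).erase β, ‖β - x‖ = ‖(n : K)‖ := by
  rw [← norm_prod, prod_sub_nthRootsFinset_erase hζ hβ, norm_mul, norm_pow,
    (isOfFinOrder_of_mem_nthRootsFinset hβ).norm_eq_one, one_pow, mul_one]

end RootsOfUnity

section Ultrametric

open Polynomial

variable {K : Type*} [NormedField K] [IsUltrametricDist K]

lemma norm_sub_le_max (x y : K) : ‖x - y‖ ≤ max ‖x‖ ‖y‖ := by
  simpa [sub_eq_add_neg] using norm_add_le_max x (-y)

lemma norm_sub_le_one {x y : K} (hx : ‖x‖ ≤ 1) (hy : ‖y‖ ≤ 1) : ‖x - y‖ ≤ 1 :=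
  (norm_sub_le_max x y).trans (max_le hx hy)

lemma norm_pow_sub_pow_le {x y : K} (hx : ‖x‖ ≤ 1) (hy : ‖y‖ ≤ 1) (n : ℕ) :
    ‖x ^ n - y ^ n‖ ≤ ‖x - y‖ := by
  rw [← geom_sum₂_mul, norm_mul]
  refine mul_le_of_le_one_left (norm_nonneg _) ?_
  refine norm_sum_le_of_forall_le_of_nonneg zero_le_one fun i _ => ?_
  rw [norm_mul, norm_pow, norm_pow]
  exact mul_le_one₀ (pow_le_one₀ (norm_nonneg x) hx) (by positivity)
    (pow_le_one₀ (norm_nonneg y) hy)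

lemma norm_natCast_eq_one_of_coprime {p m : ℕ} (hp : ‖(p : K)‖ < 1) (hpm : p.Coprime m) :
    ‖(m : K)‖ = 1 := by
  refine (norm_natCast_le_one K m).antisymm (not_lt.mp fun hm => ?_)
  have hbezout : (p : K) * (p.gcdA m : K) + m * (p.gcdB m : K) = 1 := by
    have h : (p : ℤ) * p.gcdA m + m * p.gcdB m = 1 := by rw [← Nat.gcd_eq_gcd_ab, hpm]; rfl
    exact_mod_cast congrArg (Int.cast : ℤ → K) h
  have hlt : ∀ (c : K) (z : ℤ), ‖c‖ < 1 → ‖c * z‖ < 1 := fun c z hc => by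
    rw [norm_mul]
    exact mul_lt_one_of_nonneg_of_lt_one_left (norm_nonneg c) hc (norm_intCast_le_one K z)
  have := (norm_add_le_max ((p : K) * p.gcdA m) (m * p.gcdB m)).trans_lt
    (max_lt (hlt _ _ hp) (hlt _ _ hm))
  simp [hbezout] at this

lemma norm_natCast_mul_le_prod_norm_sub [DecidableEq K] {n : ℕ} {ζ : K}
    (hζ : IsPrimitiveRoot ζ n) {S : Finset K} (hS : S ⊆ nthRootsFinset n (1 : K)) {α β : K}
    (hβ : β ∈ S) (hmin : ∀ x ∈ S, ‖β - α‖ ≤ ‖x - α‖) :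
    ‖(n : K)‖ * ‖β - α‖ ≤ ∏ x ∈ S, ‖x - α‖ := by
  have hunit : ∀ x ∈ nthRootsFinset n (1 : K), ‖x‖ = 1 := fun _ hx =>
    (isOfFinOrder_of_mem_nthRootsFinset hx).norm_eq_one
  rw [← Finset.mul_prod_erase S _ hβ, mul_comm]
  gcongr
  calc ‖(n : K)‖ = ∏ x ∈ (nthRootsFinset n (1 : K)).erase β, ‖x - β‖ := by
        simp_rw [norm_sub_rev _ β]
        exact (prod_norm_sub_nthRootsFinset_erase hζ (hS hβ)).symm
    _ ≤ ∏ x ∈ S.erase β, ‖x - β‖ :=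
        Finset.prod_le_prod_of_subset_of_le_one (Finset.erase_subset_erase β hS)
          (fun _ _ => norm_nonneg _) fun x hx _ =>
            norm_sub_le_one (hunit x (Finset.mem_of_mem_erase hx)).le (hunit β (hS hβ)).le
    _ ≤ ∏ x ∈ S.erase β, ‖x - α‖ := by
        refine Finset.prod_le_prod (fun _ _ => norm_nonneg _) fun x hx => ?_
        rw [← sub_sub_sub_cancel_right x β α]
        exact (norm_sub_le_max _ _).trans (max_le le_rfl (hmin x (Finset.mem_of_mem_erase hx)))

variable {p : ℕ} (hp : p.Prime) (hpnorm : ‖(p : K)‖ = (p : ℝ)⁻¹)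
include hp hpnorm

lemma norm_natCast_pow_mul {k m : ℕ} (hpm : ¬ p ∣ m) :
    ‖((p ^ k * m : ℕ) : K)‖ = (p : ℝ)⁻¹ ^ k := by
  have hp1 : ‖(p : K)‖ < 1 := hpnorm ▸ inv_lt_one_of_one_lt₀ (by exact_mod_cast hp.one_lt)
  push_cast
  rw [norm_mul, norm_pow, hpnorm,
    norm_natCast_eq_one_of_coprime hp1 ((hp.coprime_iff_not_dvd).mpr hpm), mul_one]

lemma inv_le_norm_natCast {n : ℕ} (hn : n ≠ 0) : (n : ℝ)⁻¹ ≤ ‖(n : K)‖ := by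
  have hsplit := Nat.ordProj_mul_ordCompl_eq_self n p
  conv_rhs => rw [← hsplit, norm_natCast_pow_mul hp hpnorm (Nat.not_dvd_ordCompl hp hn), inv_pow]
  exact inv_anti₀ (pow_pos (by exact_mod_cast hp.pos) _) (by exact_mod_cast Nat.ordProj_le p hn)

lemma half_le_norm_one_sub {η : K} (hη : IsOfFinOrder η) (hη1 : η ≠ 1) : 2⁻¹ ≤ ‖1 - η‖ := by
  classical
  set n := orderOf η
  have hn : 0 < n := hη.orderOf_pos
  have hn1 : n ≠ 1 := fun h => hη1 (orderOf_eq_one_iff.mp h)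
  have : NeZero n := ⟨hn.ne'⟩
  have hprim : IsPrimitiveRoot η n := IsPrimitiveRoot.orderOf η
  have h1 : (1 : K) ∈ nthRootsFinset n (1 : K) := (mem_nthRootsFinset hn 1).mpr (one_pow n)
  have hfactor : ∀ x ∈ (nthRootsFinset n (1 : K)).erase 1, ‖1 - x‖ ≤ ‖1 - η‖ := fun x hx => by
    obtain ⟨t, -, rfl⟩ := hprim.eq_pow_of_pow_eq_one
      ((mem_nthRootsFinset hn 1).mp (Finset.mem_of_mem_erase hx))
    simpa using norm_pow_sub_pow_le norm_one.le hη.norm_eq_one.le t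
  have hcard : ((nthRootsFinset n (1 : K)).erase 1).card = n - 1 := by
    rw [Finset.card_erase_of_mem h1, hprim.card_nthRootsFinset]
  have hupper : ‖(n : K)‖ ≤ ‖1 - η‖ ^ (n - 1) := by
    rw [← prod_norm_sub_nthRootsFinset_erase hprim h1, ← hcard, ← Finset.prod_const]
    exact Finset.prod_le_prod (fun _ _ => norm_nonneg _) hfactor
  have hlower : (2⁻¹ : ℝ) ^ (n - 1) ≤ ‖(n : K)‖ := by
    refine le_trans ?_ (inv_le_norm_natCast hp hpnorm hn.ne')
    have : n ≤ 2 ^ (n - 1) := by have := Nat.lt_two_pow_self (n := n - 1); omega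
    rw [inv_pow]
    exact inv_anti₀ (by exact_mod_cast hn) (by exact_mod_cast this)
  exact le_of_pow_le_pow_left₀ (by omega) (norm_nonneg _) (hlower.trans hupper)

lemma pairwise_half_le_dist_of_isOfFinOrder :
    {ξ : K | IsOfFinOrder ξ}.Pairwise fun x y => 2⁻¹ ≤ dist x y := by
  intro x (hx : IsOfFinOrder x) y (hy : IsOfFinOrder y) hxy
  have hy0 : y ≠ 0 := fun h => by simpa [h] using hy.norm_eq_one
  have : x - y = -y * (1 - x * y⁻¹) := by field_simp; ring
  rw [dist_eq_norm, this, norm_mul, norm_neg, hy.norm_eq_one, one_mul]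
  have hxy' : IsOfFinOrder (x * y⁻¹) := by
    refine isOfFinOrder_iff_pow_eq_one.mpr ⟨orderOf x * orderOf y,
      Nat.mul_pos hx.orderOf_pos hy.orderOf_pos, ?_⟩
    rw [mul_pow, inv_pow, pow_mul, pow_orderOf_eq_one, mul_comm (orderOf x), pow_mul,
      pow_orderOf_eq_one]
    simp
  exact half_le_norm_one_sub hp hpnorm hxy' fun h => hxy ((mul_inv_eq_one₀ hy0).mp h)

end Ultrametric

section PolynomialValues

variable {K : Type*} [NontriviallyNormedField K]

lemma gaussNorm_nonneg (F : K[X]) : 0 ≤ gaussNorm F := NNReal.coe_nonneg _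

lemma norm_coeff_le_gaussNorm (F : K[X]) (i : ℕ) : ‖F.coeff i‖ ≤ gaussNorm F := by
  by_cases hi : i ∈ F.support
  · exact_mod_cast Finset.le_sup (f := fun i => ‖F.coeff i‖₊) hi
  · simpa [Polynomial.notMem_support_iff.mp hi] using gaussNorm_nonneg F

lemma gaussNorm_pos {F : K[X]} (hF : F ≠ 0) : 0 < gaussNorm F :=
  (norm_pos_iff.mpr (Polynomial.leadingCoeff_ne_zero.mpr hF)).trans_le (norm_coeff_le_gaussNorm F _)

lemma norm_eval_le_norm_sub_mul_gaussNorm [IsUltrametricDist K] {F : K[X]} {α x : K}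
    (hroot : F.eval α = 0) (hα : ‖α‖ ≤ 1) (hx : ‖x‖ ≤ 1) :
    ‖F.eval x‖ ≤ ‖x - α‖ * gaussNorm F := by
  have hdiff : F.eval x = ∑ i ∈ Finset.range (F.natDegree + 1), F.coeff i * (x ^ i - α ^ i) := by
    rw [← sub_zero (F.eval x), ← hroot, Polynomial.eval_eq_sum_range, Polynomial.eval_eq_sum_range,
      ← Finset.sum_sub_distrib]
    simp_rw [mul_sub]
  rw [hdiff, mul_comm]
  refine norm_sum_le_of_forall_le_of_nonneg
    (mul_nonneg (gaussNorm_nonneg F) (norm_nonneg _)) fun i _ => ?_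
  rw [norm_mul]
  exact mul_le_mul (norm_coeff_le_gaussNorm F i) (norm_pow_sub_pow_le hx hα i) (norm_nonneg _)
    (gaussNorm_nonneg F)

lemma infF_le_norm_eval {F : K[X]} {ξ : K} (hξ : IsOfFinOrder ξ) (hξF : F.eval ξ ≠ 0) :
    infF F ≤ ‖F.eval ξ‖ :=
  csInf_le ⟨0, fun _ ⟨_, _, _, hr⟩ => hr ▸ norm_nonneg _⟩ ⟨ξ, hξ, hξF, rfl⟩

lemma infF_div_gaussNorm_mul_le_prod_norm_sub [IsUltrametricDist K] [DecidableEq K] {F : K[X]}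
    {α : K} (hroot : F.eval α = 0) (hα : ‖α‖ ≤ 1) {n : ℕ} {ζ : K} (hζ : IsPrimitiveRoot ζ n)
    {S : Finset K} (hS : S ⊆ Polynomial.nthRootsFinset n (1 : K)) (hSne : S.Nonempty)
    (hvan : ∀ x ∈ S, F.eval x ≠ 0) :
    infF F / gaussNorm F * ‖(n : K)‖ ≤ ∏ x ∈ S, ‖x - α‖ := by
  obtain ⟨β, hβ, hmin⟩ := S.exists_min_image (‖· - α‖) hSne
  have hβ1 := isOfFinOrder_of_mem_nthRootsFinset (hS hβ)
  have hF : F ≠ 0 := fun h => hvan β hβ (by simp [h])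
  calc infF F / gaussNorm F * ‖(n : K)‖ ≤ ‖β - α‖ * ‖(n : K)‖ := by
        gcongr
        rw [div_le_iff₀ (gaussNorm_pos hF)]
        exact (infF_le_norm_eval hβ1 (hvan β hβ)).trans
          (norm_eval_le_norm_sub_mul_gaussNorm hroot hα hβ1.norm_eq_one.le)
    _ ≤ ∏ x ∈ S, ‖x - α‖ := by
        rw [mul_comm]
        exact norm_natCast_mul_le_prod_norm_sub hζ hS hβ hmin

variable [IsUltrametricDist K] [IsAlgClosed K] {p : ℕ} (hp : p.Prime)
  (hpnorm : ‖(p : K)‖ = (p : ℝ)⁻¹)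
include hp hpnorm

lemma exists_pos_forall_le_norm_eval {F : K[X]} (hF : F ≠ 0) :
    ∃ b > 0, ∀ ξ : K, IsOfFinOrder ξ → F.eval ξ ≠ 0 → b ≤ ‖F.eval ξ‖ := by
  choose B hBpos hB using exists_pos_forall_le_dist_of_pairwise (by norm_num)
    (pairwise_half_le_dist_of_isOfFinOrder hp hpnorm)
  refine ⟨‖F.leadingCoeff‖ * (F.roots.map B).prod,
    mul_pos (norm_pos_iff.mpr (Polynomial.leadingCoeff_ne_zero.mpr hF))
      (Multiset.prod_pos fun b hb => ?_),
    fun ξ hξ hξF => ?_⟩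
  · obtain ⟨r, -, rfl⟩ := Multiset.mem_map.mp hb
    exact hBpos r
  have hnorm : ‖F.eval ξ‖ = ‖F.leadingCoeff‖ * (F.roots.map (‖ξ - ·‖)).prod := by
    rw [(IsAlgClosed.splits F).eval_eq_prod_roots, norm_mul]
    exact congrArg _ ((map_multiset_prod (normHom : K →*₀ ℝ) _).trans (by simp [Multiset.map_map]))
  rw [hnorm]
  refine mul_le_mul_of_nonneg_left (Multiset.prod_map_le_prod_map₀ _ _ (fun r _ => (hBpos r).le)
    fun r hr => ?_) (norm_nonneg _)
  simpa [dist_eq_norm] using hB r ξ hξ fun h => hξF (h ▸ Polynomial.isRoot_of_mem_roots hr)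

lemma infF_pos {F : K[X]} {ξ : K} (hξ : IsOfFinOrder ξ) (hξF : F.eval ξ ≠ 0) : 0 < infF F := by
  obtain ⟨b, hb, hbF⟩ :=
    exists_pos_forall_le_norm_eval hp hpnorm (F := F) fun h => hξF (by simp [h])
  exact hb.trans_le (le_csInf ⟨_, ξ, hξ, hξF, rfl⟩ fun _ ⟨ξ, hξ, hξF, hr⟩ => hr ▸ hbF ξ hξ hξF)

end PolynomialValues

/-- `Gal(ℚ(ζ)/ℚ)` is identified with `(ZMod N)ˣ`, `σ` acting by `ζ ↦ ζ ^ σ.val`. -/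
theorem stmt8_general {p : ℕ} (hp : p.Prime)
    {K : Type*} [NontriviallyNormedField K] [IsUltrametricDist K] [IsAlgClosed K]
    (hpnorm : ‖(p : K)‖ = (p : ℝ)⁻¹)
    (F : Polynomial K) (hF : F ≠ 0) (α : K) (hα : ‖α‖ = 1) (hroot : F.eval α = 0)
    (k m N : ℕ) (hm : 0 < m) (hpm : ¬ p ∣ m) (hNval : N = p ^ k * m)
    (ζ : K) (hζ : orderOf ζ = N)
    (M : Finset (ZMod N)ˣ) (hM : M.Nonempty)
    (hvan : ∀ σ ∈ M, F.eval (ζ ^ ((σ : ZMod N).val)) ≠ 0) :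
    (∑ σ ∈ M, Real.log ‖ζ ^ ((σ : ZMod N).val) - α‖) ≤ 0 ∧
      -(cF F + k * Real.log p) ≤ ∑ σ ∈ M, Real.log ‖ζ ^ ((σ : ZMod N).val) - α‖ := by
  classical
  have hN : N ≠ 0 := hNval ▸ (Nat.mul_pos (pow_pos hp.pos k) hm).ne'
  have : NeZero N := ⟨hN⟩
  have hprim : IsPrimitiveRoot ζ N := hζ ▸ IsPrimitiveRoot.orderOf ζ
  set f : (ZMod N)ˣ → K := fun σ => ζ ^ (σ : ZMod N).val
  have hf_root : ∀ σ, f σ ∈ Polynomial.nthRootsFinset N (1 : K) := fun σ =>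
    (hprim.pow_of_coprime _ (ZMod.val_coe_unit_coprime σ)).mem_nthRootsFinset (NeZero.pos N)
  have hf_unit : ∀ σ, ‖f σ‖ = 1 := fun σ =>
    (isOfFinOrder_of_mem_nthRootsFinset (hf_root σ)).norm_eq_one
  have hf_inj : Set.InjOn f M := fun σ _ τ _ h =>
    Units.ext (ZMod.val_injective N (hprim.pow_inj (ZMod.val_lt _) (ZMod.val_lt _) h))
  have hf_pos : ∀ σ ∈ M, 0 < ‖f σ - α‖ := fun σ hσ =>
    norm_pos_iff.mpr (sub_ne_zero.mpr fun h => hvan σ hσ (by rwa [← h] at hroot))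
  refine ⟨Finset.sum_nonpos fun σ _ =>
    Real.log_nonpos (norm_nonneg _) (norm_sub_le_one (hf_unit σ).le hα.le), ?_⟩
  have hlower : infF F / gaussNorm F * (p : ℝ)⁻¹ ^ k ≤ ∏ σ ∈ M, ‖f σ - α‖ := by
    rw [← Finset.prod_image (f := (‖· - α‖)) hf_inj, ← norm_natCast_pow_mul hp hpnorm hpm, ← hNval]
    exact infF_div_gaussNorm_mul_le_prod_norm_sub hroot hα.le hprim
      (Finset.image_subset_iff.mpr fun σ _ => hf_root σ) (hM.image f)
      (Finset.forall_mem_image.mpr hvan)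
  obtain ⟨σ₀, hσ₀⟩ := hM
  have hc : 0 < infF F / gaussNorm F :=
    div_pos (infF_pos hp hpnorm (hprim.isOfFinOrder hN).pow (hvan σ₀ hσ₀)) (gaussNorm_pos hF)
  rw [← Real.log_prod fun σ hσ => (hf_pos σ hσ).ne']
  calc -(cF F + k * Real.log p) = Real.log (infF F / gaussNorm F * (p : ℝ)⁻¹ ^ k) := by
        rw [cF, Real.log_mul hc.ne' (by simp [hp.ne_zero]), Real.log_pow, Real.log_inv]
        ring
    _ ≤ _ := Real.log_le_log (mul_pos hc (by simp [hp.pos])) hlower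

/-- Let `α ∈ ℂ_p` with `|α|_p = 1` be a root of the nonzero polynomial `F ∈ ℂ_p[X]`,
and let `ζ` be a root of unity of order `p^k·m` with `p ∤ m`.  Identifying
`Gal(ℚ(ζ)/ℚ)` with `(ZMod N)ˣ` (where `N = p^k·m`), let `M` be a nonempty subset with
`F(σ(ζ)) ≠ 0` for all `σ ∈ M`. Then
`0 ≥ Σ_{σ∈M} log|σ(ζ) - α|_p ≥ -(c(F) + k·log p)`. -/
theorem stmt8 {p : ℕ} (hp : p.Prime)
    {K : Type*} [NontriviallyNormedField K] [IsUltrametricDist K] [IsAlgClosed K]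
    [CompleteSpace K] (hpnorm : ‖(p : K)‖ = (p : ℝ)⁻¹)
    (F : Polynomial K) (hF : F ≠ 0) (α : K) (hα : ‖α‖ = 1) (hroot : F.eval α = 0)
    (k m N : ℕ) (hm : 0 < m) (hpm : ¬ p ∣ m) (hNval : N = p ^ k * m)
    (ζ : K) (hζ : orderOf ζ = N)
    (M : Finset (ZMod N)ˣ) (hM : M.Nonempty)
    (hvan : ∀ σ ∈ M, F.eval (ζ ^ ((σ : ZMod N).val)) ≠ 0) :
    (∑ σ ∈ M, Real.log ‖ζ ^ ((σ : ZMod N).val) - α‖) ≤ 0 ∧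
      -(cF F + k * Real.log p) ≤ ∑ σ ∈ M, Real.log ‖ζ ^ ((σ : ZMod N).val) - α‖ :=
  stmt8_general hp hpnorm F hF α hα hroot k m N hm hpm hNval ζ hζ M hM hvan
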